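/- arXiv:2512.11594 — 2 statements merged into one kernel-verified Lean document; each statement's English description precedes it below -/
import Mathlib

section
/- The Rényi divergence of the transformed density satisfies D_ξ[A_α^{(h)}[f] || h] = α D_{ξ_α}[f||h] + (α−1) D_α[h||f], where ξ_α = 1 + α(ξ−1). Equivalently, K_ξ[A_α^{(h)}[f] || h]^{1/(ξ-1)} = K_{ξ_α}[f||h]^{1/(ξ-1)} · K_α[h||f]. -/
open MeasureTheory Set

open Topology Filter

lemma aux_integrableOn_Ioc {xi xf a b : ℝ} {p : ℝ → ℝ}
    (hint : IntegrableOn p (Ioo xi xf)) (ha : xi ≤ a) (hb : b ≤ xf) :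
    IntegrableOn p (Ioc a b) := by
  rw [integrableOn_Ioc_iff_integrableOn_Ioo]
  exact hint.mono_set (Ioo_subset_Ioo ha hb)

lemma aux_integral_Ioc_pos {xi xf a b : ℝ} {p : ℝ → ℝ}
    (hint : IntegrableOn p (Ioo xi xf)) (hpos : ∀ x ∈ Ioo xi xf, 0 < p x)
    (ha : xi ≤ a) (hab : a < b) (hb : b ≤ xf) :
    0 < ∫ t in Ioc a b, p t := by
  have h1 : IntervalIntegrable p volume a b :=
    (intervalIntegrable_iff_integrableOn_Ioc_of_le hab.le).2 (aux_integrableOn_Ioc hint ha hb)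
  have h2 := intervalIntegral.intervalIntegral_pos_of_pos_on h1
    (fun x hx => hpos x (Ioo_subset_Ioo ha hb hx)) hab
  rwa [intervalIntegral.integral_of_le hab.le] at h2

lemma aux_integral_Ioo_pos {xi xf : ℝ} {p : ℝ → ℝ} (hx : xi < xf)
    (hint : IntegrableOn p (Ioo xi xf)) (hpos : ∀ x ∈ Ioo xi xf, 0 < p x) :
    0 < ∫ t in Ioo xi xf, p t := by
  rw [← integral_Ioc_eq_integral_Ioo]
  exact aux_integral_Ioc_pos hint hpos le_rfl hx le_rfl

lemma aux_primitive_strictMonoOn {xi xf : ℝ} {p : ℝ → ℝ}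
    (hint : IntegrableOn p (Ioo xi xf)) (hpos : ∀ x ∈ Ioo xi xf, 0 < p x) :
    StrictMonoOn (fun x => ∫ t in Ioc xi x, p t) (Icc xi xf) := by
  intro a ha b hb hab
  have hsplit : ∫ t in Ioc xi b, p t = (∫ t in Ioc xi a, p t) + ∫ t in Ioc a b, p t := by
    rw [← setIntegral_union (Ioc_disjoint_Ioc_of_le le_rfl) measurableSet_Ioc
      (aux_integrableOn_Ioc hint le_rfl ha.2) (aux_integrableOn_Ioc hint ha.1 hb.2),
      Ioc_union_Ioc_eq_Ioc ha.1 hab.le]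
  have hpos' : 0 < ∫ t in Ioc a b, p t := aux_integral_Ioc_pos hint hpos ha.1 hab hb.2
  simp only []
  linarith

lemma aux_primitive_hasDerivAt {xi xf x : ℝ} {p : ℝ → ℝ}
    (hint : IntegrableOn p (Ioo xi xf)) (hcont : ContinuousOn p (Ioo xi xf))
    (hx : x ∈ Ioo xi xf) :
    HasDerivAt (fun u => ∫ t in Ioc xi u, p t) (p x) x := by
  have h1 : IntervalIntegrable p volume xi x :=
    (intervalIntegrable_iff_integrableOn_Ioc_of_le hx.1.le).2
      (aux_integrableOn_Ioc hint le_rfl hx.2.le)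
  have hca : ContinuousAt p x := hcont.continuousAt (isOpen_Ioo.mem_nhds hx)
  have hmeas : StronglyMeasurableAtFilter p (𝓝 x) :=
    hcont.stronglyMeasurableAtFilter isOpen_Ioo x hx
  have hd := intervalIntegral.integral_hasDerivAt_right h1 hmeas hca
  refine hd.congr_of_eventuallyEq ?_
  filter_upwards [eventually_gt_nhds hx.1] with u hu
  rw [intervalIntegral.integral_of_le hu.le]

/-- K_α[h||f] := ∫_Ω f^{1−α} h^α. -/
noncomputable def Kdiv (Ω : Set ℝ) (f h : ℝ → ℝ) (α : ℝ) : ℝ :=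
  ∫ t in Ω, f t ^ (1 - α) * h t ^ α

/-- The divergence transformation A_α^{(h)}[f]. -/
noncomputable def Adiv (Ω : Set ℝ) (f h : ℝ → ℝ) (α : ℝ) (xof : ℝ → ℝ) (z : ℝ) : ℝ :=
  Kdiv Ω f h α * (f (xof z) / h (xof z)) ^ α * h z

/-- Rényi divergence of the transformed density:
D_ξ[A_α^{(h)}[f] || h] = α D_{ξ_α}[f||h] + (α−1) D_α[h||f], with ξ_α = 1 + α(ξ−1). -/
theorem renyi_divergence_of_transform
    (xi xf : ℝ) (hx : xi < xf) (f h : ℝ → ℝ)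
    (hfc : ContinuousOn f (Ioo xi xf)) (hhc : ContinuousOn h (Ioo xi xf))
    (hfpos : ∀ x ∈ Ioo xi xf, 0 < f x) (hhpos : ∀ x ∈ Ioo xi xf, 0 < h x)
    (hf1 : ∫ t in Ioo xi xf, f t = 1) (hh1 : ∫ t in Ioo xi xf, h t = 1)
    (α ξ : ℝ) (hξ : ξ ≠ 1) (hξα : 1 + α * (ξ - 1) ≠ 1)
    (hK : IntegrableOn (fun t => f t ^ (1 - α) * h t ^ α) (Ioo xi xf))
    (hKξα : IntegrableOn
      (fun t => f t ^ (1 + α * (ξ - 1)) * h t ^ (1 - (1 + α * (ξ - 1)))) (Ioo xi xf))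
    (xof : ℝ → ℝ)
    (hmem : ∀ z ∈ Ioo xi xf, xof z ∈ Ioo xi xf)
    (hdef : ∀ z ∈ Ioo xi xf,
      ∫ s in Ioo xi z, h s =
        (∫ t in Ioo xi (xof z), f t ^ (1 - α) * h t ^ α) / Kdiv (Ioo xi xf) f h α) :
    (ξ - 1)⁻¹ *
        Real.log (∫ z in Ioo xi xf,
          Adiv (Ioo xi xf) f h α xof z ^ ξ * h z ^ (1 - ξ)) =
      α * (((1 + α * (ξ - 1)) - 1)⁻¹ *
          Real.log (∫ t in Ioo xi xf,
            f t ^ (1 + α * (ξ - 1)) * h t ^ (1 - (1 + α * (ξ - 1)))))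
        + (α - 1) * ((α - 1)⁻¹ * Real.log (Kdiv (Ioo xi xf) f h α)) := by
  classical
  set N : ℝ := 1 + α * (ξ - 1) with hNdef
  set K : ℝ := Kdiv (Ioo xi xf) f h α with hK_def
  set I : ℝ → ℝ := fun t => f t ^ (1 - α) * h t ^ α with hIdef
  -- basic facts
  have hIcont : ContinuousOn I (Ioo xi xf) :=
    (hfc.rpow_const fun x hxx => Or.inl (hfpos x hxx).ne').mul
      (hhc.rpow_const fun x hxx => Or.inl (hhpos x hxx).ne')
  have hIpos : ∀ x ∈ Ioo xi xf, 0 < I x := fun x hxx =>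
    mul_pos (Real.rpow_pos_of_pos (hfpos x hxx) _) (Real.rpow_pos_of_pos (hhpos x hxx) _)
  have hh_int : IntegrableOn h (Ioo xi xf) := by
    by_contra hc
    rw [integral_undef hc] at hh1
    exact one_ne_zero hh1.symm
  have hKpos : 0 < K := aux_integral_Ioo_pos hx hK hIpos
  have hKne : K ≠ 0 := hKpos.ne'
  -- primitives
  set Φ : ℝ → ℝ := fun x => ∫ t in Ioc xi x, I t with hΦdef
  set G : ℝ → ℝ := fun z => ∫ t in Ioc xi z, h t with hGdef
  have hΦxi : Φ xi = 0 := by simp [hΦdef]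
  have hGxi : G xi = 0 := by simp [hGdef]
  have hΦxf : Φ xf = K := by
    rw [hΦdef]; simp only []
    rw [integral_Ioc_eq_integral_Ioo]; rfl
  have hGxf : G xf = 1 := by
    rw [hGdef]; simp only []
    rw [integral_Ioc_eq_integral_Ioo]; exact hh1
  have hΦmono : StrictMonoOn Φ (Icc xi xf) := aux_primitive_strictMonoOn hK hIpos
  have hGmono : StrictMonoOn G (Icc xi xf) := aux_primitive_strictMonoOn hh_int hhpos
  have hΦcont : ContinuousOn Φ (Icc xi xf) :=
    intervalIntegral.continuousOn_primitive ((integrableOn_Icc_iff_integrableOn_Ioo (f := I) (a := xi) (b := xf)).2 hK)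
  have hGcont : ContinuousOn G (Icc xi xf) :=
    intervalIntegral.continuousOn_primitive ((integrableOn_Icc_iff_integrableOn_Ioo (f := h) (a := xi) (b := xf)).2 hh_int)
  have hΦderiv : ∀ x ∈ Ioo xi xf, HasDerivAt Φ (I x) x := fun x hxx =>
    aux_primitive_hasDerivAt hK hIcont hxx
  have hGderiv : ∀ z ∈ Ioo xi xf, HasDerivAt G (h z) z := fun z hz =>
    aux_primitive_hasDerivAt hh_int hhc hz
  have hdef' : ∀ z ∈ Ioo xi xf, Φ (xof z) = K * G z := by
    intro z hz
    have h1 := hdef z hz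
    rw [hΦdef, hGdef]; simp only []
    rw [integral_Ioc_eq_integral_Ioo, integral_Ioc_eq_integral_Ioo, h1,
      mul_div_cancel₀ _ hKne]
  have hΦmem : ∀ x ∈ Ioo xi xf, Φ x ∈ Ioo 0 K := by
    intro x hxx
    constructor
    · rw [← hΦxi]; exact hΦmono (left_mem_Icc.2 hx.le) (Ioo_subset_Icc_self hxx) hxx.1
    · rw [← hΦxf]; exact hΦmono (Ioo_subset_Icc_self hxx) (right_mem_Icc.2 hx.le) hxx.2
  -- injectivity and surjectivity of xof
  have hxofInj : InjOn xof (Ioo xi xf) := by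
    intro a ha b hb hab
    have h1 : K * G a = K * G b := by rw [← hdef' a ha, ← hdef' b hb, hab]
    exact hGmono.injOn (Ioo_subset_Icc_self ha) (Ioo_subset_Icc_self hb)
      (mul_left_cancel₀ hKne h1)
  have himg : xof '' (Ioo xi xf) = Ioo xi xf := by
    refine Subset.antisymm (image_subset_iff.2 hmem) ?_
    intro x hxx
    have hΦx := hΦmem x hxx
    have hu : Φ x / K ∈ Ioo (G xi) (G xf) := by
      rw [hGxi, hGxf]
      exact ⟨div_pos hΦx.1 hKpos, (div_lt_one hKpos).2 hΦx.2⟩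
    obtain ⟨z, hz, hGz⟩ := intermediate_value_Ioo hx.le hGcont hu
    refine ⟨z, hz, ?_⟩
    have h1 : Φ (xof z) = Φ x := by
      rw [hdef' z hz, hGz, mul_div_cancel₀ _ hKne]
    exact hΦmono.injOn (Ioo_subset_Icc_self (hmem z hz)) (Ioo_subset_Icc_self hxx) h1
  -- continuity of xof
  have hxof_cont : ∀ z ∈ Ioo xi xf, ContinuousAt xof z := by
    intro z hz
    have hx₀ := hmem z hz
    have hKG_cont : ContinuousAt (fun w => K * G w) z :=
      continuousAt_const.mul (hGderiv z hz).continuousAt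
    rw [ContinuousAt]
    apply tendsto_order.2
    constructor
    · intro c hc
      obtain ⟨x₁, hx₁l, hx₁r⟩ := exists_between (max_lt hc hx₀.1)
      have hx₁Ω : x₁ ∈ Ioo xi xf :=
        ⟨lt_of_le_of_lt (le_max_right c xi) hx₁l, hx₁r.trans hx₀.2⟩
      have hΦlt : Φ x₁ < K * G z := by
        rw [← hdef' z hz]
        exact hΦmono (Ioo_subset_Icc_self hx₁Ω) (Ioo_subset_Icc_self hx₀) hx₁r
      filter_upwards [hKG_cont.eventually (eventually_gt_nhds hΦlt),
        isOpen_Ioo.eventually_mem hz] with w h1 h2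
      have h3 : Φ x₁ < Φ (xof w) := by rwa [hdef' w h2]
      by_contra hle
      push_neg at hle
      have h4 : Φ (xof w) ≤ Φ x₁ :=
        hΦmono.monotoneOn (Ioo_subset_Icc_self (hmem w h2)) (Ioo_subset_Icc_self hx₁Ω)
          (hle.trans ((le_max_left c xi).trans hx₁l.le))
      linarith
    · intro c hc
      obtain ⟨x₁, hx₁l, hx₁r⟩ := exists_between (lt_min hc hx₀.2)
      have hx₁Ω : x₁ ∈ Ioo xi xf :=
        ⟨hx₀.1.trans hx₁l, lt_of_lt_of_le hx₁r (min_le_right c xf)⟩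
      have hΦlt : K * G z < Φ x₁ := by
        rw [← hdef' z hz]
        exact hΦmono (Ioo_subset_Icc_self hx₀) (Ioo_subset_Icc_self hx₁Ω) hx₁l
      filter_upwards [hKG_cont.eventually (eventually_lt_nhds hΦlt),
        isOpen_Ioo.eventually_mem hz] with w h1 h2
      have h3 : Φ (xof w) < Φ x₁ := by rwa [hdef' w h2]
      by_contra hle
      push_neg at hle
      have h4 : Φ x₁ ≤ Φ (xof w) :=
        hΦmono.monotoneOn (Ioo_subset_Icc_self hx₁Ω) (Ioo_subset_Icc_self (hmem w h2))
          (hx₁r.le.trans ((min_le_left c xf).trans hle))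
      linarith
  -- derivative of xof
  have hxof_deriv : ∀ z ∈ Ioo xi xf,
      HasDerivAt xof ((I (xof z))⁻¹ * (K * h z)) z := by
    intro z hz
    have hx₀ := hmem z hz
    have hne : I (xof z) ≠ 0 := (hIpos _ hx₀).ne'
    have hstrict : HasStrictDerivAt Φ (I (xof z)) (xof z) := by
      apply hasStrictDerivAt_of_hasDerivAt_of_continuousAt
      · filter_upwards [isOpen_Ioo.eventually_mem hx₀] with y hy
        exact hΦderiv y hy
      · exact hIcont.continuousAt (isOpen_Ioo.mem_nhds hx₀)
    set Ψ : ℝ → ℝ := hstrict.localInverse Φ _ _ hne with hΨdef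
    have hΨd : HasStrictDerivAt Ψ (I (xof z))⁻¹ (Φ (xof z)) := hstrict.to_localInverse hne
    have hlef : ∀ᶠ x in 𝓝 (xof z), Ψ (Φ x) = x :=
      (hstrict.hasStrictFDerivAt_equiv hne).eventually_left_inverse
    have hev : xof =ᶠ[𝓝 z] fun w => Ψ (K * G w) := by
      have hxc : Tendsto xof (𝓝 z) (𝓝 (xof z)) := hxof_cont z hz
      filter_upwards [hxc.eventually hlef, isOpen_Ioo.eventually_mem hz] with w h1 h2
      show xof w = Ψ (K * G w)
      rw [← hdef' w h2, h1]
    have hinner : HasDerivAt (fun w => K * G w) (K * h z) z := (hGderiv z hz).const_mul K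
    have houter : HasDerivAt Ψ (I (xof z))⁻¹ (K * G z) := by
      rw [← hdef' z hz]; exact hΨd.hasDerivAt
    have hcomp : HasDerivAt (fun w => Ψ (K * G w)) ((I (xof z))⁻¹ * (K * h z)) z :=
      HasDerivAt.comp z houter hinner
    exact hcomp.congr_of_eventuallyEq hev
  -- change of variables
  set Q : ℝ := ∫ t in Ioo xi xf, f t ^ N * h t ^ (1 - N) with hQdef
  have hQpos : 0 < Q := aux_integral_Ioo_pos hx hKξα (fun t ht =>
    mul_pos (Real.rpow_pos_of_pos (hfpos t ht) _) (Real.rpow_pos_of_pos (hhpos t ht) _))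
  set g : ℝ → ℝ := fun x => (f x / h x) ^ (α * ξ) * (I x / K) with hgdef
  set D : ℝ → ℝ := fun z => (I (xof z))⁻¹ * (K * h z) with hDdef
  have hsub : ∫ x in Ioo xi xf, g x = ∫ z in Ioo xi xf, |D z| • g (xof z) := by
    conv_lhs => rw [← himg]
    exact integral_image_eq_integral_abs_deriv_smul measurableSet_Ioo
      (fun z hz => (hxof_deriv z hz).hasDerivWithinAt) hxofInj g
  have hDpos : ∀ z ∈ Ioo xi xf, 0 < D z := fun z hz =>
    mul_pos (inv_pos.2 (hIpos _ (hmem z hz))) (mul_pos hKpos (hhpos z hz))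
  have hstep1 : ∫ z in Ioo xi xf, |D z| • g (xof z)
      = ∫ z in Ioo xi xf, (f (xof z) / h (xof z)) ^ (α * ξ) * h z := by
    apply setIntegral_congr_fun measurableSet_Ioo
    intro z hz
    have hne : I (xof z) ≠ 0 := (hIpos _ (hmem z hz)).ne'
    dsimp only
    rw [smul_eq_mul, abs_of_pos (hDpos z hz)]
    simp only [hDdef, hgdef]
    field_simp
  have hstep2 : ∫ x in Ioo xi xf, g x = K⁻¹ * Q := by
    rw [hQdef, ← integral_const_mul]
    apply setIntegral_congr_fun measurableSet_Ioo
    intro t ht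
    have hf0 := hfpos t ht
    have hh0 := hhpos t ht
    have e1 : f t ^ (α * ξ) * f t ^ (1 - α) = f t ^ N := by
      rw [← Real.rpow_add hf0]; congr 1; rw [hNdef]; ring
    have e2 : h t ^ (-(α * ξ)) * h t ^ α = h t ^ (1 - N) := by
      rw [← Real.rpow_add hh0]; congr 1; rw [hNdef]; ring
    calc g t = (f t ^ (α * ξ) * f t ^ (1 - α)) * (h t ^ (-(α * ξ)) * h t ^ α) * K⁻¹ := by
          simp only [hgdef, hIdef]
          rw [Real.div_rpow hf0.le hh0.le, Real.rpow_neg hh0.le]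
          ring
      _ = K⁻¹ * (f t ^ N * h t ^ (1 - N)) := by rw [e1, e2]; ring
  have hmainA : (∫ z in Ioo xi xf, Adiv (Ioo xi xf) f h α xof z ^ ξ * h z ^ (1 - ξ))
      = K ^ ξ * ∫ z in Ioo xi xf, (f (xof z) / h (xof z)) ^ (α * ξ) * h z := by
    rw [← integral_const_mul]
    apply setIntegral_congr_fun measurableSet_Ioo
    intro z hz
    have hx₀ := hmem z hz
    have hq : 0 < f (xof z) / h (xof z) := div_pos (hfpos _ hx₀) (hhpos _ hx₀)
    have hhz := hhpos z hz
    have hA : Adiv (Ioo xi xf) f h α xof z = K * (f (xof z) / h (xof z)) ^ α * h z := rfl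
    dsimp only
    rw [hA, Real.mul_rpow (mul_nonneg hKpos.le (Real.rpow_nonneg hq.le α)) hhz.le,
      Real.mul_rpow hKpos.le (Real.rpow_nonneg hq.le α), ← Real.rpow_mul hq.le,
      mul_assoc, mul_assoc, ← Real.rpow_add hhz,
      show ξ + (1 - ξ) = (1 : ℝ) from by ring, Real.rpow_one]
  have hchain : (∫ z in Ioo xi xf, Adiv (Ioo xi xf) f h α xof z ^ ξ * h z ^ (1 - ξ))
      = K ^ ξ * (K⁻¹ * Q) := by
    rw [hmainA, ← hstep1, ← hsub, hstep2]
  rw [hchain]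
  have hξ1 : ξ - 1 ≠ 0 := sub_ne_zero.2 hξ
  have hαξ : α * (ξ - 1) ≠ 0 := by
    intro hc
    exact hξα (by rw [hNdef, hc, add_zero])
  have hα0 : α ≠ 0 := fun hc => hαξ (by rw [hc, zero_mul])
  rw [Real.log_mul (Real.rpow_pos_of_pos hKpos ξ).ne' (mul_pos (inv_pos.2 hKpos) hQpos).ne',
    Real.log_mul (inv_ne_zero hKne) hQpos.ne', Real.log_rpow hKpos, Real.log_inv]
  have hN1 : N - 1 = α * (ξ - 1) := by rw [hNdef]; ring
  rw [hN1]
  by_cases hα1 : α = 1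
  · subst hα1
    have hK1 : K = 1 := by
      rw [hK_def]
      show (∫ t in Ioo xi xf, f t ^ (1 - (1 : ℝ)) * h t ^ (1 : ℝ)) = 1
      simp only [sub_self, Real.rpow_zero, Real.rpow_one, one_mul]
      exact hh1
    rw [hK1, Real.log_one]
    field_simp
    simp
  · have hα1' : α - 1 ≠ 0 := sub_ne_zero.2 hα1
    field_simp
    ring
end

section
/- For two Gaussians as above (h standard with variance 1/2, f with mean μ and variance σ²), the change of variable in the divergence transformation is affine: x(y) = √(2σ²/(1+α(2σ²−1)))·y + μ(1−α)/(1+α(2σ²−1)), and consequently the transformed density A_α^{(h)}[f] is again a Gaussian density (proportional to exp of a quadratic in y with negative leading coefficient −1/(1+α(2σ²−1))). -/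
open MeasureTheory Set Real

/-- h(x) = e^{-x²}/√π. -/
noncomputable def hGauss (x : ℝ) : ℝ := (Real.sqrt Real.pi)⁻¹ * Real.exp (-x ^ 2)

/-- f(x) = e^{-(x−μ)²/(2σ²)}/√(2πσ²). -/
noncomputable def fGauss (μ σ x : ℝ) : ℝ :=
  (Real.sqrt (2 * Real.pi * σ ^ 2))⁻¹ * Real.exp (-(x - μ) ^ 2 / (2 * σ ^ 2))

/-- K_α[h||f] = ∫_ℝ f^{1−α} h^α for the two Gaussians. -/
noncomputable def KGauss (μ σ α : ℝ) : ℝ :=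
  ∫ x : ℝ, fGauss μ σ x ^ (1 - α) * hGauss x ^ α

/-- The affine change of variable x(y). -/
noncomputable def xofGauss (μ σ α y : ℝ) : ℝ :=
  Real.sqrt (2 * σ ^ 2 / (1 + α * (2 * σ ^ 2 - 1))) * y +
    μ * (1 - α) / (1 + α * (2 * σ ^ 2 - 1))

lemma myIntegral_Iio_add (g : ℝ → ℝ) (a m : ℝ) :
    ∫ x in Iio a, g (x + m) = ∫ x in Iio (a + m), g x := by
  have h1 : ∀ x : ℝ, (Iio a).indicator (fun t => g (t + m)) x
      = (Iio (a + m)).indicator g (x + m) := by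
    intro x
    by_cases hx : x < a
    · rw [Set.indicator_of_mem (by simpa using hx),
        Set.indicator_of_mem (by simp; linarith)]
    · rw [Set.indicator_of_notMem (by simpa using hx),
        Set.indicator_of_notMem (by simp; linarith)]
  rw [← integral_indicator measurableSet_Iio, ← integral_indicator measurableSet_Iio]
  simp_rw [h1]
  exact integral_add_right_eq_self ((Iio (a+m)).indicator g) m

lemma myIntegral_Iio_mul (g : ℝ → ℝ) (a : ℝ) {b : ℝ} (hb : 0 < b) :
    ∫ x in Iio a, g (b * x) = b⁻¹ • ∫ x in Iio (b * a), g x := by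
  rw [← integral_indicator measurableSet_Iio, ← integral_indicator measurableSet_Iio,
    ← abs_of_pos (inv_pos.mpr hb), ← Measure.integral_comp_mul_left]
  congr 1
  ext1 x
  rw [← Set.indicator_comp_right,
    show (HMul.hMul b ⁻¹' Iio (b * a)) = Iio (b * a / b) from preimage_const_mul_Iio₀ (b * a) hb,
    mul_div_cancel_left₀ _ hb.ne']
  rfl

lemma pointwiseGauss (μ σ α : ℝ) (hσ : 0 < σ) (hc : 0 < 1 + α * (2 * σ ^ 2 - 1)) :
    ∀ t : ℝ,
      fGauss μ σ t ^ (1 - α) * hGauss t ^ α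
      = ((Real.sqrt (2 * Real.pi * σ ^ 2))⁻¹ ^ (1 - α) * (Real.sqrt Real.pi)⁻¹ ^ α
          * Real.exp (-(α * (1 - α) * μ ^ 2) / (1 + α * (2 * σ ^ 2 - 1))))
        * Real.exp (-((1 + α * (2 * σ ^ 2 - 1)) / (2 * σ ^ 2))
            * (t - μ * (1 - α) / (1 + α * (2 * σ ^ 2 - 1))) ^ 2) := by
  intro t
  unfold fGauss hGauss
  have hA : (0:ℝ) ≤ (Real.sqrt (2 * Real.pi * σ ^ 2))⁻¹ := by positivity
  have hB : (0:ℝ) ≤ (Real.sqrt Real.pi)⁻¹ := by positivity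
  rw [Real.mul_rpow hA (Real.exp_nonneg _), Real.mul_rpow hB (Real.exp_nonneg _),
    ← Real.exp_mul, ← Real.exp_mul]
  rw [mul_mul_mul_comm, ← Real.exp_add]
  conv_rhs => rw [mul_assoc, ← Real.exp_add]
  congr 1
  have hσ2 : (2 * σ ^ 2) ≠ 0 := by positivity
  have hc' : (1 + α * (2 * σ ^ 2 - 1)) ≠ 0 := ne_of_gt hc
  rw [Real.exp_eq_exp]
  field_simp
  ring

lemma KGauss_eq (μ σ α : ℝ) (hσ : 0 < σ) (hc : 0 < 1 + α * (2 * σ ^ 2 - 1)) :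
    KGauss μ σ α =
      ((Real.sqrt (2 * Real.pi * σ ^ 2))⁻¹ ^ (1 - α) * (Real.sqrt Real.pi)⁻¹ ^ α
          * Real.exp (-(α * (1 - α) * μ ^ 2) / (1 + α * (2 * σ ^ 2 - 1))))
        * Real.sqrt (Real.pi / ((1 + α * (2 * σ ^ 2 - 1)) / (2 * σ ^ 2))) := by
  unfold KGauss
  simp_rw [pointwiseGauss μ σ α hσ hc]
  rw [MeasureTheory.integral_const_mul]
  congr 1
  rw [integral_sub_right_eq_self
      (fun x => Real.exp (-((1 + α * (2 * σ ^ 2 - 1)) / (2 * σ ^ 2)) * x ^ 2))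
      (μ * (1 - α) / (1 + α * (2 * σ ^ 2 - 1)))]
  exact integral_gaussian _

set_option maxHeartbeats 2000000 in
/-- for two Gaussians, the change of variable of the divergence
transformation is affine, and the transformed density is again Gaussian:
A_α^{(h)}[f](y) = 𝒦 exp(−y²/c + 2√2 αμσ c^{−3/2} y) with c = 1+α(2σ²−1). -/
theorem divergence_transform_gaussian
    (μ σ α : ℝ) (hσ : 0 < σ) (hσ' : σ ≠ (Real.sqrt 2)⁻¹)
    (hc : 0 < 1 + α * (2 * σ ^ 2 - 1)) :
    (∀ y : ℝ,
      ∫ s in Iio y, hGauss s =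
        (KGauss μ σ α)⁻¹ *
          ∫ t in Iio (xofGauss μ σ α y), fGauss μ σ t ^ (1 - α) * hGauss t ^ α) ∧
    (∀ y : ℝ,
      KGauss μ σ α * (fGauss μ σ (xofGauss μ σ α y) / hGauss (xofGauss μ σ α y)) ^ α *
          hGauss y =
        (Real.sqrt (Real.pi * (1 + α * (2 * σ ^ 2 - 1))))⁻¹ *
          Real.exp (-(2 * μ ^ 2 * σ ^ 2 * α ^ 2) / (1 + α * (2 * σ ^ 2 - 1)) ^ 2) *
          Real.exp (-(y ^ 2) / (1 + α * (2 * σ ^ 2 - 1)) +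
            (2 * Real.sqrt 2 * α * μ * σ /
              (1 + α * (2 * σ ^ 2 - 1)) ^ ((3:ℝ)/2)) * y)) := by
  set c : ℝ := 1 + α * (2 * σ ^ 2 - 1) with hcdef
  have hc0 : c ≠ 0 := ne_of_gt hc
  have hσ2 : (0:ℝ) < 2 * σ ^ 2 := by positivity
  set β : ℝ := c / (2 * σ ^ 2) with hβdef
  have hβ : 0 < β := div_pos hc hσ2
  set m : ℝ := μ * (1 - α) / c with hmdef
  set a : ℝ := Real.sqrt (2 * σ ^ 2 / c) with hadef
  have ha : 0 < a := Real.sqrt_pos.mpr (div_pos hσ2 hc)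
  have ha2 : a ^ 2 = 2 * σ ^ 2 / c := Real.sq_sqrt (div_pos hσ2 hc).le
  set A : ℝ := (Real.sqrt (2 * Real.pi * σ ^ 2))⁻¹ with hAdef
  set B : ℝ := (Real.sqrt Real.pi)⁻¹ with hBdef
  have hApos : 0 < A := by rw [hAdef]; positivity
  have hBpos : 0 < B := by rw [hBdef]; positivity
  set D : ℝ := -(α * (1 - α) * μ ^ 2) / c with hDdef
  set C : ℝ := A ^ (1 - α) * B ^ α * Real.exp D with hCdef
  have hCpos : 0 < C := by
    rw [hCdef]
    exact mul_pos (mul_pos (Real.rpow_pos_of_pos hApos _) (Real.rpow_pos_of_pos hBpos _))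
      (Real.exp_pos _)
  -- √(π/β) = √π * a
  have hsqrtc : Real.sqrt c ≠ 0 := Real.sqrt_ne_zero'.mpr hc
  have hs2 : Real.sqrt (2 * σ ^ 2) = Real.sqrt 2 * σ := by
    rw [show (2 * σ ^ 2 : ℝ) = 2 * σ ^ 2 from rfl, Real.sqrt_mul (by norm_num),
      Real.sqrt_sq hσ.le]
  have haval : a = Real.sqrt (2 * σ ^ 2) / Real.sqrt c := by
    rw [hadef, Real.sqrt_div hσ2.le]
  have hπβ : Real.sqrt (Real.pi / β) = Real.sqrt Real.pi * a := by
    have hfrac : Real.pi / β = Real.pi * (2 * σ ^ 2 / c) := by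
      rw [hβdef]; field_simp
    rw [hfrac, Real.sqrt_mul Real.pi_pos.le, ← hadef]
  have hK : KGauss μ σ α = C * (Real.sqrt Real.pi * a) := by
    rw [KGauss_eq μ σ α hσ hc, ← hπβ]
  have hxof : ∀ y : ℝ, xofGauss μ σ α y = a * y + m := fun y => rfl
  have hpw : ∀ t : ℝ, fGauss μ σ t ^ (1 - α) * hGauss t ^ α
      = C * Real.exp (-β * (t - m) ^ 2) := by
    intro t
    rw [hCdef, hAdef, hBdef, hDdef, hβdef, hmdef]
    exact pointwiseGauss μ σ α hσ hc t
  have hfx : ∀ x : ℝ, fGauss μ σ x = A * Real.exp (-(x - μ) ^ 2 / (2 * σ ^ 2)) := by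
    intro x; rw [hAdef]; rfl
  have hhx : ∀ x : ℝ, hGauss x = B * Real.exp (-x ^ 2) := by
    intro x; rw [hBdef]; rfl
  clear_value c β m a A B D C
  constructor
  · intro y
    rw [hxof y]
    calc ∫ s in Iio y, hGauss s = B * ∫ s in Iio y, Real.exp (-s ^ 2) := by
          simp_rw [hhx]; rw [MeasureTheory.integral_const_mul]
      _ = (KGauss μ σ α)⁻¹ *
          ∫ t in Iio (a * y + m), fGauss μ σ t ^ (1 - α) * hGauss t ^ α := by
        simp_rw [hpw]
        rw [MeasureTheory.integral_const_mul]
        rw [← myIntegral_Iio_add (fun t => Real.exp (-β * (t - m) ^ 2)) (a * y) m]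
        have h2 : ∀ x : ℝ, Real.exp (-β * (x + m - m) ^ 2) = Real.exp (-β * x ^ 2) := by
          intro x; congr 2; ring
        simp_rw [h2]
        have h3 := myIntegral_Iio_mul (fun x => Real.exp (-β * x ^ 2)) y ha
        have h4 : ∀ x : ℝ, Real.exp (-β * (a * x) ^ 2) = Real.exp (-x ^ 2) := by
          intro x; congr 1
          have : β * a ^ 2 = 1 := by rw [ha2, hβdef]; field_simp
          nlinarith [this]
        simp_rw [h4, smul_eq_mul] at h3
        rw [hK]
        have h5 : ∫ x in Iio (a * y), Real.exp (-β * x ^ 2)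
            = a * ∫ x in Iio y, Real.exp (-x ^ 2) := by
          rw [h3, ← mul_assoc, mul_inv_cancel₀ ha.ne', one_mul]
        rw [h5, hBdef]
        have hsπ : Real.sqrt Real.pi ≠ 0 := by positivity
        field_simp [hCpos.ne']
  · intro y
    rw [hxof y, hK, hfx, hhx, hhx]
    rw [mul_div_mul_comm, ← Real.exp_sub,
      Real.mul_rpow (div_nonneg hApos.le hBpos.le) (Real.exp_nonneg _),
      Real.div_rpow hApos.le hBpos.le, ← Real.exp_mul]
    have hL : 2 * Real.sqrt 2 * α * μ * σ / c ^ ((3:ℝ)/2) = 2 * a * α * μ / c := by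
      rw [show ((3:ℝ)/2) = 1 + 1/2 by norm_num, Real.rpow_add hc, Real.rpow_one,
        ← Real.sqrt_eq_rpow, haval, hs2]
      field_simp
    rw [hL]
    have hexpid : D + (-(a * y + m - μ) ^ 2 / (2 * σ ^ 2) - -(a * y + m) ^ 2) * α + (-y ^ 2)
        = -(2 * μ ^ 2 * σ ^ 2 * α ^ 2) / c ^ 2
          + (-(y ^ 2) / c + (2 * a * α * μ / c) * y) := by
      rw [hDdef, hmdef]
      have e1 : (a * y + μ * (1 - α) / c) ^ 2
          = a ^ 2 * y ^ 2 + 2 * (a * y) * (μ * (1 - α) / c) + (μ * (1 - α) / c) ^ 2 := by ring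
      have e2 : (a * y + μ * (1 - α) / c - μ) ^ 2
          = a ^ 2 * y ^ 2 + 2 * (a * y) * (μ * (1 - α) / c - μ)
            + (μ * (1 - α) / c - μ) ^ 2 := by ring
      rw [e1, e2, ha2, hcdef]
      have hcne : (1 + α * (2 * σ ^ 2 - 1)) ≠ 0 := by rw [← hcdef]; exact hc0
      field_simp [hcne]
      ring
    have hconst : C * (A ^ α / B ^ α) * B * (Real.sqrt Real.pi * a)
        = (Real.sqrt (Real.pi * c))⁻¹ * Real.exp D := by
      rw [hCdef]
      have hπc : Real.sqrt (Real.pi * c) = Real.sqrt Real.pi * Real.sqrt c :=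
        Real.sqrt_mul Real.pi_pos.le c
      have hAcomb : A ^ (1 - α) * A ^ α = A := by
        rw [← Real.rpow_add hApos]; norm_num
      have hBα : B ^ α ≠ 0 := ne_of_gt (Real.rpow_pos_of_pos hBpos _)
      have hsπ : Real.sqrt Real.pi ≠ 0 := by positivity
      calc A ^ (1 - α) * B ^ α * Real.exp D * (A ^ α / B ^ α) * B * (Real.sqrt Real.pi * a)
          = (A ^ (1 - α) * A ^ α) * A⁻¹ * (A * B * Real.sqrt Real.pi * a) * Real.exp D := by
            field_simp
        _ = (Real.sqrt (Real.pi * c))⁻¹ * Real.exp D := by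
            rw [hAcomb, hπc, hAdef, hBdef, haval, hs2]
            have hs2' : Real.sqrt 2 * σ ≠ 0 := by positivity
            have hA0 : Real.sqrt (2 * Real.pi * σ ^ 2) = Real.sqrt 2 * σ * Real.sqrt Real.pi := by
              rw [show (2 * Real.pi * σ ^ 2 : ℝ) = 2 * σ ^ 2 * Real.pi by ring,
                Real.sqrt_mul hσ2.le, hs2]
            rw [hA0]
            field_simp
    calc C * (Real.sqrt Real.pi * a) *
          (A ^ α / B ^ α *
            Real.exp ((-(a * y + m - μ) ^ 2 / (2 * σ ^ 2) - -(a * y + m) ^ 2) * α)) *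
          (B * Real.exp (-y ^ 2))
        = (C * (A ^ α / B ^ α) * B * (Real.sqrt Real.pi * a)) *
            Real.exp ((-(a * y + m - μ) ^ 2 / (2 * σ ^ 2) - -(a * y + m) ^ 2) * α + (-y ^ 2)) := by
          rw [Real.exp_add]; ring
      _ = (Real.sqrt (Real.pi * c))⁻¹ *
            Real.exp (D + ((-(a * y + m - μ) ^ 2 / (2 * σ ^ 2) - -(a * y + m) ^ 2) * α + (-y ^ 2))) := by
          rw [hconst]; conv_rhs => rw [Real.exp_add]
          ring
      _ = _ := by
          rw [← add_assoc, hexpid, Real.exp_add]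
          ring
end
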